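/- Let (𝔄, G, Θ) be a C*-dynamical system with 𝔄 separable and G countable discrete amenable, (F_k) a right Følner sequence, S a nonempty set of states on 𝔄, x ∈ 𝔄 self-adjoint, and λ ∈ ℝ. Let P^F(S) be the set of weak*-limit points of sequences (φ_k ∘ Avg_{F_k}) with φ_k ∈ S, and ‖y‖_S := sup_{φ∈S} |φ(y)|. Then {ψ(x) : ψ ∈ P^F(S)} = {λ} if and only if lim_{k→∞} ‖Avg_{F_k} x − λ·1‖_S = 0. -/

import Mathlib

open scoped ComplexOrder symmDiff

/-- A state on a unital C*-algebra, as an element of the weak-* dual. -/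
def IsState {A : Type*} [NormedRing A] [StarRing A] [CStarRing A] [NormedAlgebra ℂ A]
    [CompleteSpace A] [StarModule ℂ A] (φ : WeakDual ℂ A) : Prop :=
  φ 1 = 1 ∧ ∀ a : A, 0 ≤ φ (star a * a)

/-- An action by algebra automorphisms is a *-action if each automorphism preserves `star`,
i.e. each `Θ g` is a *-automorphism. -/
def IsStarAction {A G : Type*} [NormedRing A] [StarRing A] [NormedAlgebra ℂ A] [Group G]
    (Θ : G →* (A ≃ₐ[ℂ] A)) : Prop :=
  ∀ (g : G) (x : A), Θ g (star x) = star (Θ g x)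

/-- The ergodic average `Avg_F x = (1/|F|) ∑_{g ∈ F} Θ_g x`. -/
noncomputable def avg {A G : Type*} [NormedRing A] [NormedAlgebra ℂ A] [Group G]
    (Θ : G →* (A ≃ₐ[ℂ] A)) (F : Finset G) (x : A) : A :=
  ((F.card : ℂ))⁻¹ • ∑ g ∈ F, Θ g x

/-- A right Følner sequence: nonempty finite sets with `|F_k g Δ F_k| / |F_k| → 0`. -/
def RightFolner {G : Type*} [Group G] [DecidableEq G] (F : ℕ → Finset G) : Prop :=
  (∀ k, (F k).Nonempty) ∧ ∀ g : G, Filter.Tendsto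
    (fun k => ((Finset.image (· * g) (F k) ∆ F k).card : ℝ) / (F k).card)
    Filter.atTop (nhds 0)

/-!
Every `φ ∘ Avg_{F_k}` with `φ` a state is a linear functional of norm at most `4`: states are
bounded, and `Avg_{F_k}` is contractive because *-automorphisms of a C*-algebra are isometric.
By Banach–Alaoglu, any sequence of such functionals, along any nontrivial filter, has weak-*
cluster points. If `‖Avg_{F_k} x - λ‖_S → 0`, then `φ_k(Avg_{F_k} x) → λ` for every choice of
`φ_k ∈ S`, so every cluster point takes the value `λ` at `x`. Conversely, if
`‖Avg_{F_k} x - λ‖_S ≥ ε` for infinitely many `k`, pick `φ_k ∈ S` with `|φ_k(Avg_{F_k} x) - λ| > ε/2` there; a cluster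
point along these `k` is a point of `P^F(S)` whose value at `x` is at distance `≥ ε/2` from `λ`.
-/

open Filter Topology

section SupNormOn

variable {ι V : Type*} [SeminormedAddCommGroup V] {S : Set ι} {f g : ι → V}

/-- For a set `S` of states and `f φ = φ y`, this is the seminorm `‖y‖_S`. -/
noncomputable def supNormOn (S : Set ι) (f : ι → V) : ℝ :=
  sSup {r : ℝ | ∃ i ∈ S, r = ‖f i‖}

theorem supNormOn_nonneg : 0 ≤ supNormOn S f :=
  Real.sSup_nonneg fun _ ⟨_, _, hr⟩ => hr ▸ norm_nonneg _

theorem norm_le_supNormOn {B : ℝ} (hB : ∀ i ∈ S, ‖f i‖ ≤ B) {i : ι} (hi : i ∈ S) :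
    ‖f i‖ ≤ supNormOn S f :=
  le_csSup ⟨B, fun _ ⟨j, hj, hr⟩ => hr ▸ hB j hj⟩ ⟨i, hi, rfl⟩

theorem exists_lt_norm_of_lt_supNormOn (hS : S.Nonempty) {r : ℝ} (hr : r < supNormOn S f) :
    ∃ i ∈ S, r < ‖f i‖ := by
  obtain ⟨i₀, hi₀⟩ := hS
  obtain ⟨_, ⟨i, hi, rfl⟩, hlt⟩ :=
    exists_lt_of_lt_csSup (s := {r : ℝ | ∃ i ∈ S, r = ‖f i‖}) ⟨_, i₀, hi₀, rfl⟩ hr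
  exact ⟨i, hi, hlt⟩

theorem supNormOn_congr (h : ∀ i ∈ S, f i = g i) : supNormOn S f = supNormOn S g := by
  unfold supNormOn
  congr 1
  ext r
  exact exists_congr fun i => and_congr_right fun hi => by rw [h i hi]

end SupNormOn

section ClusterValues

variable {𝕜 E : Type*} [NontriviallyNormedField 𝕜] [NormedAddCommGroup E] [NormedSpace 𝕜 E]

theorem exists_weakDual_mapClusterPt [ProperSpace 𝕜] {α : Type*} {l : Filter α} [l.NeBot]
    {u : α → E → 𝕜} {C : ℝ} (hlin : ∀ a, IsLinearMap 𝕜 (u a)) (hbdd : ∀ a y, ‖u a y‖ ≤ C * ‖y‖) :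
    ∃ ψ : WeakDual 𝕜 E, MapClusterPt (⇑ψ : E → 𝕜) l u := by
  let v : α → WeakDual 𝕜 E := fun a => (IsLinearMap.mk' (u a) (hlin a)).mkContinuous C (hbdd a)
  have hv : ∀ a, v a ∈ WeakDual.toStrongDual ⁻¹' Metric.closedBall 0 (max C 0) := fun a =>
    mem_closedBall_zero_iff.mpr ((IsLinearMap.mk' (u a) (hlin a)).mkContinuous_norm_le' (hbdd a))
  obtain ⟨ψ, -, hψ⟩ := (WeakDual.isCompact_closedBall 0 (max C 0)).exists_mapClusterPt
    (f := l) (u := v) (tendsto_principal.mpr (Eventually.of_forall hv))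
  exact ⟨ψ, hψ.continuousAt_comp WeakDual.coeFn_continuous.continuousAt⟩

variable {ι : Type*} {T : ℕ → ι → E → 𝕜} {S : Set ι} {C : ℝ}

theorem mapClusterPt_apply_eq_of_tendsto_supNormOn
    (hbdd : ∀ k, ∀ i ∈ S, ∀ y, ‖T k i y‖ ≤ C * ‖y‖) {x : E} {c : 𝕜}
    (hlim : Tendsto (fun k => supNormOn S (fun i => T k i x - c)) atTop (𝓝 0))
    {φ : ℕ → ι} (hφS : ∀ k, φ k ∈ S) {ψ : WeakDual 𝕜 E}
    (hψ : MapClusterPt (⇑ψ : E → 𝕜) atTop (fun k => T k (φ k))) :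
    ψ x = c := by
  have hdev : ∀ k, ‖T k (φ k) x - c‖ ≤ supNormOn S (fun i => T k i x - c) := fun k =>
    norm_le_supNormOn (f := fun i => T k i x - c) (B := C * ‖x‖ + ‖c‖)
      (fun i hi => by linarith [norm_sub_le (T k i x) c, hbdd k i hi x]) (hφS k)
  have hconv : Tendsto (fun k => T k (φ k) x) atTop (𝓝 c) :=
    tendsto_iff_norm_sub_tendsto_zero.mpr (squeeze_zero (fun _ => norm_nonneg _) hdev hlim)
  have hcluster : MapClusterPt (ψ x) atTop (fun k => T k (φ k) x) :=
    hψ.continuousAt_comp (continuous_apply x).continuousAt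
  exact eq_of_nhds_neBot (hcluster.clusterPt.mono hconv)

theorem tendsto_supNormOn_of_forall_mapClusterPt [ProperSpace 𝕜]
    (hlin : ∀ k i, IsLinearMap 𝕜 (T k i)) (hbdd : ∀ k, ∀ i ∈ S, ∀ y, ‖T k i y‖ ≤ C * ‖y‖)
    (hS : S.Nonempty) {x : E} {c : 𝕜}
    (h : ∀ (ψ : WeakDual 𝕜 E) (φ : ℕ → ι), (∀ k, φ k ∈ S) →
      MapClusterPt (⇑ψ : E → 𝕜) atTop (fun k => T k (φ k)) → ψ x = c) :
    Tendsto (fun k => supNormOn S (fun i => T k i x - c)) atTop (𝓝 0) := by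
  set s := fun k => supNormOn S (fun i => T k i x - c)
  by_contra hnot
  obtain ⟨ε, hε, hfreq⟩ : ∃ ε > 0, ∃ᶠ k in atTop, ε ≤ s k := by
    rw [Metric.tendsto_nhds] at hnot
    push Not at hnot
    obtain ⟨ε, hε, hfreq⟩ := hnot
    refine ⟨ε, hε, hfreq.mono fun k hk => ?_⟩
    rwa [Real.dist_eq, sub_zero, abs_of_nonneg supNormOn_nonneg] at hk
  -- Cluster along the indices with `ε ≤ s k`, where the nearly maximizing `φ k` stay `ε/2` away.
  let l := atTop ⊓ 𝓟 {k | ε ≤ s k}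
  have : l.NeBot := frequently_mem_iff_neBot.mp hfreq
  choose φ hφS hφ using fun k =>
    exists_lt_norm_of_lt_supNormOn hS (sub_lt_self (s k) (half_pos hε))
  obtain ⟨ψ, hψ⟩ := exists_weakDual_mapClusterPt (l := l) (u := fun k => T k (φ k))
    (fun k => hlin k (φ k)) (fun k => hbdd k (φ k) (hφS k))
  have hfar : ∀ᶠ k in l, T k (φ k) x ∈ {z | ε / 2 ≤ ‖z - c‖} :=
    eventually_inf_principal.mpr (Eventually.of_forall fun k (hk : ε ≤ s k) => by
      show ε / 2 ≤ ‖T k (φ k) x - c‖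
      linarith [hφ k])
  have hcluster : MapClusterPt (ψ x) l (fun k => T k (φ k) x) :=
    hψ.continuousAt_comp (continuous_apply x).continuousAt
  have hψx : ε / 2 ≤ ‖ψ x - c‖ :=
    (isClosed_le continuous_const (continuous_sub_right c).norm).mem_of_mapClusterPt hcluster hfar
  rw [h ψ φ hφS (hψ.mono inf_le_left), sub_self, norm_zero] at hψx
  linarith

theorem clusterValues_eq_singleton_iff_tendsto_supNormOn [ProperSpace 𝕜]
    (hlin : ∀ k i, IsLinearMap 𝕜 (T k i)) (hbdd : ∀ k, ∀ i ∈ S, ∀ y, ‖T k i y‖ ≤ C * ‖y‖)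
    (hS : S.Nonempty) (x : E) (c : 𝕜) :
    {z : 𝕜 | ∃ ψ : WeakDual 𝕜 E, (∃ φ : ℕ → ι, (∀ k, φ k ∈ S) ∧
        MapClusterPt (⇑ψ : E → 𝕜) atTop (fun k => T k (φ k))) ∧ z = ψ x} = {c} ↔
      Tendsto (fun k => supNormOn S (fun i => T k i x - c)) atTop (𝓝 0) := by
  rw [Set.eq_singleton_iff_unique_mem]
  constructor
  · rintro ⟨-, hunique⟩
    exact tendsto_supNormOn_of_forall_mapClusterPt hlin hbdd hS
      fun ψ φ hφS hψ => hunique _ ⟨ψ, ⟨φ, hφS, hψ⟩, rfl⟩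
  · intro hlim
    obtain ⟨i₀, hi₀⟩ := hS
    obtain ⟨ψ, hψ⟩ := exists_weakDual_mapClusterPt (l := atTop) (u := fun k => T k i₀)
      (hlin · i₀) (hbdd · i₀ hi₀)
    refine ⟨⟨ψ, ⟨fun _ => i₀, fun _ => hi₀, hψ⟩,
      (mapClusterPt_apply_eq_of_tendsto_supNormOn hbdd hlim (fun _ => hi₀) hψ).symm⟩, ?_⟩
    rintro z ⟨ψ, ⟨φ, hφS, hψ⟩, rfl⟩
    exact mapClusterPt_apply_eq_of_tendsto_supNormOn hbdd hlim hφS hψ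

end ClusterValues

theorem isLinearMap_apply_avg {A G : Type*} [NormedRing A] [NormedAlgebra ℂ A] [Group G]
    (Θ : G →* (A ≃ₐ[ℂ] A)) (φ : WeakDual ℂ A) (F : Finset G) :
    IsLinearMap ℂ fun y => φ (avg Θ F y) where
  map_add y z := by simp only [avg, map_add, Finset.sum_add_distrib, smul_add]
  map_smul c y := by simp only [avg, map_smul, ← Finset.smul_sum, smul_comm c]

section CStarDynamics

variable {A : Type*} [NormedRing A] [StarRing A] [CStarRing A] [NormedAlgebra ℂ A]
  [CompleteSpace A] [StarModule ℂ A]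

variable (A) in
abbrev CStarAlgebra.ofCStarRing : CStarAlgebra A :=
  { ‹NormedRing A›, ‹StarRing A›, ‹CompleteSpace A›, ‹CStarRing A›, ‹NormedAlgebra ℂ A›,
    ‹StarModule ℂ A› with }

/-- Not sharp (the sharp constant is `1`); only the uniformity in `φ` matters. -/
theorem IsState.norm_apply_le {φ : WeakDual ℂ A} (hφ : IsState φ) (a : A) :
    ‖φ a‖ ≤ 4 * ‖a‖ := by
  let := CStarAlgebra.ofCStarRing A
  let := CStarAlgebra.spectralOrder A
  have := CStarAlgebra.spectralOrderedRing A
  have hnonneg : ∀ y : A, 0 ≤ y → 0 ≤ φ y := by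
    intro y hy
    rw [StarOrderedRing.nonneg_iff] at hy
    induction hy using AddSubmonoid.closure_induction with
    | mem z hz => obtain ⟨s, rfl⟩ := hz; exact hφ.2 s
    | zero => simp
    | add y z _ _ hy hz => rw [map_add]; exact add_nonneg hy hz
  let f : A →ₚ[ℂ] ℂ := .mk₀ (φ : A →L[ℂ] ℂ) hnonneg
  have hle : ∀ y : A, 0 ≤ y → ‖φ y‖ ≤ ‖y‖ := fun y hy => by
    have h : ‖φ y‖ ≤ ‖φ 1‖ * ‖y‖ := f.norm_apply_le_of_nonneg y hy
    rwa [hφ.1, norm_one, one_mul] at h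
  obtain ⟨y, hy_nonneg, hy_norm, hy⟩ := CStarAlgebra.exists_sum_four_nonneg a
  calc ‖φ a‖ = ‖∑ i : Fin 4, Complex.I ^ (i : ℕ) * φ (y i)‖ := by
        conv_lhs => rw [hy]
        simp [map_sum, map_smul]
    _ ≤ ∑ i : Fin 4, ‖φ (y i)‖ := by
        refine (norm_sum_le _ _).trans (Finset.sum_le_sum fun i _ => ?_)
        simp
    _ ≤ ∑ _i : Fin 4, ‖a‖ :=
        Finset.sum_le_sum fun i _ => (hle _ (hy_nonneg i)).trans (hy_norm i)
    _ = 4 * ‖a‖ := by simp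

variable {G : Type*} [Group G] {Θ : G →* (A ≃ₐ[ℂ] A)}

theorem IsStarAction.norm_apply_le (hΘ : IsStarAction Θ) (g : G) (y : A) : ‖Θ g y‖ ≤ ‖y‖ := by
  let := CStarAlgebra.ofCStarRing A
  exact NonUnitalStarAlgHom.norm_apply_le (StarAlgEquiv.ofAlgEquiv (Θ g) (hΘ g)) y

theorem IsStarAction.norm_avg_le (hΘ : IsStarAction Θ) (F : Finset G) (y : A) :
    ‖avg Θ F y‖ ≤ ‖y‖ := by
  rcases F.eq_empty_or_nonempty with rfl | hF
  · simp [avg]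
  have hcard : (0 : ℝ) < F.card := mod_cast hF.card_pos
  calc ‖avg Θ F y‖ = (F.card : ℝ)⁻¹ * ‖∑ g ∈ F, Θ g y‖ := by simp [avg, norm_smul]
    _ ≤ (F.card : ℝ)⁻¹ * (F.card * ‖y‖) := by
        gcongr
        simpa using norm_sum_le_of_le F fun g _ => hΘ.norm_apply_le g y
    _ = ‖y‖ := by field_simp

end CStarDynamics

theorem stmt18_general {A G : Type*} [NormedRing A] [StarRing A] [CStarRing A] [NormedAlgebra ℂ A]
    [CompleteSpace A] [StarModule ℂ A] [Group G]
    (Θ : G →* (A ≃ₐ[ℂ] A)) (hΘ : IsStarAction Θ) (F : ℕ → Finset G)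
    (S : Set (WeakDual ℂ A)) (hSne : S.Nonempty) (hSstates : ∀ φ ∈ S, IsState φ)
    (x : A) (lam : ℝ) :
    ({z : ℂ | ∃ ψ : WeakDual ℂ A,
        (∃ φ : ℕ → WeakDual ℂ A, (∀ k, φ k ∈ S) ∧
          MapClusterPt (⇑ψ : A → ℂ) Filter.atTop
            (fun k (y : A) => φ k (avg Θ (F k) y))) ∧ z = ψ x}
      = {((lam : ℂ))}) ↔
    Filter.Tendsto
      (fun k => sSup {r : ℝ | ∃ φ ∈ S, r = ‖φ (avg Θ (F k) x - (lam : ℂ) • (1 : A))‖})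
      Filter.atTop (nhds 0) := by
  have hbdd : ∀ k, ∀ φ ∈ S, ∀ y, ‖φ (avg Θ (F k) y)‖ ≤ 4 * ‖y‖ := fun k φ hφ y =>
    calc ‖φ (avg Θ (F k) y)‖ ≤ 4 * ‖avg Θ (F k) y‖ := (hSstates φ hφ).norm_apply_le _
      _ ≤ 4 * ‖y‖ := by gcongr; exact hΘ.norm_avg_le (F k) y
  have hshift : ∀ k, ∀ φ ∈ S,
      φ (avg Θ (F k) x) - lam = φ (avg Θ (F k) x - (lam : ℂ) • (1 : A)) := fun k φ hφ => by
    rw [map_sub, map_smul, (hSstates φ hφ).1, smul_eq_mul, mul_one]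
  exact (clusterValues_eq_singleton_iff_tendsto_supNormOn (𝕜 := ℂ)
    (fun k φ => isLinearMap_apply_avg Θ φ (F k)) hbdd hSne x lam).trans
    (tendsto_congr fun k => supNormOn_congr (hshift k))

/-- Relative Herman ergodic theorem: the values at a self-adjoint `x` of all weak*-limit
points of sequences `(φ_k ∘ Avg_{F_k})` with `φ_k ∈ S` equal `{λ}` iff
`‖Avg_{F_k} x − λ·1‖_S → 0`, where `‖y‖_S = sup_{φ∈S} |φ(y)|`. -/
theorem stmt18 {A G : Type*} [NormedRing A] [StarRing A] [CStarRing A] [NormedAlgebra ℂ A]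
    [CompleteSpace A] [StarModule ℂ A] [TopologicalSpace.SeparableSpace A]
    [Group G] [Countable G] [DecidableEq G]
    (Θ : G →* (A ≃ₐ[ℂ] A)) (hΘ : IsStarAction Θ)
    (F : ℕ → Finset G) (hF : RightFolner F)
    (S : Set (WeakDual ℂ A)) (hSne : S.Nonempty) (hSstates : ∀ φ ∈ S, IsState φ)
    (x : A) (hx : star x = x) (lam : ℝ) :
    ({z : ℂ | ∃ ψ : WeakDual ℂ A,
        (∃ φ : ℕ → WeakDual ℂ A, (∀ k, φ k ∈ S) ∧
          MapClusterPt (⇑ψ : A → ℂ) Filter.atTop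
            (fun k (y : A) => φ k (avg Θ (F k) y))) ∧ z = ψ x}
      = {((lam : ℂ))}) ↔
    Filter.Tendsto
      (fun k => sSup {r : ℝ | ∃ φ ∈ S, r = ‖φ (avg Θ (F k) x - (lam : ℂ) • (1 : A))‖})
      Filter.atTop (nhds 0) :=
  stmt18_general Θ hΘ F S hSne hSstates x lam
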